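/- arXiv:1312.5986 — 6 statements merged into one kernel-verified Lean document; each statement's English description precedes it below -/
import Mathlib

section
/- Let u ∈ C¹(ℝⁿ) and let B_R(a) be the ball of radius R centered at a. Then u(a) − ⨍_{B_R(a)} u = (1/n) ⨍_{B_R(a)} ⟨Du(x), a − x⟩ (Rⁿ/|a − x|ⁿ − 1) dx, where ⨍ denotes the average integral over the ball. -/
/-!
Integrating `u a - u x = ∫₀¹ Du(a + t(x - a))[a - x] dt` over the ball and exchanging the
integrals, the homothety `x ↦ a + t(x - a)` maps `B_R(a)` onto `B_{tR}(a)` with Jacobian `tⁿ`, and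
`Du(y)[a - y] = t Du(y)[a - x]` for `y = a + t(x - a)`; so the inner integral becomes
`t^{-(n+1)} ∫_{B_{tR}(a)} Du(y)[a - y] dy`. Exchanging the integrals once more, the point `y`
receives the weight `∫_{|y-a|/R}^1 t^{-(n+1)} dt = (Rⁿ/|a - y|ⁿ - 1)/n`. The second exchange is
legitimate because `|Du(y)[a - y]| ≤ C tR` on `B_{tR}(a)`, which cancels the extra factor `t⁻¹`.
Only the scaling of Haar measure enters, so the argument works for any norm on a
finite-dimensional space, any Haar measure and vector-valued `u`.
-/

open MeasureTheory Metric Set Module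

theorem integral_inv_pow_succ {n : ℕ} (hn : n ≠ 0) {b c : ℝ} (hb : 0 < b) (hc : 0 < c) :
    ∫ t in b..c, (t ^ (n + 1))⁻¹ = ((b ^ n)⁻¹ - (c ^ n)⁻¹) / n := by
  have h0 : (0 : ℝ) ∉ uIcc b c := fun h => (lt_min hb hc).not_ge (by simpa using h.1)
  have hzpow : ∀ t : ℝ, (t ^ (n + 1))⁻¹ = t ^ (-(n + 1 : ℤ)) := fun t => by
    rw [zpow_neg]; norm_cast
  simp_rw [hzpow]
  rw [integral_zpow (Or.inr ⟨by omega, h0⟩), show -(n + 1 : ℤ) + 1 = -n by ring, zpow_neg,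
    zpow_neg, zpow_natCast, zpow_natCast]
  push_cast
  rw [show -((n : ℝ) + 1) + 1 = -n by ring, div_neg, ← neg_div, neg_sub]

section Kernel

variable {X F : Type*} [PseudoMetricSpace X] [NormedAddCommGroup F] [NormedSpace ℝ F]
  [CompleteSpace F]

theorem integral_Ioc_indicator_ball_inv_pow_succ {n : ℕ} (hn : n ≠ 0) (g : X → F) {a y : X}
    {R : ℝ} (hR : 0 < R) (hy : y ∈ ball a R) (hya : 0 < dist y a) :
    ∫ t in Ioc (0:ℝ) 1, (ball a (t * R)).indicator (fun z => (t ^ (n + 1))⁻¹ • g z) y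
      = ((R ^ n / dist y a ^ n - 1) / n) • g y := by
  set c := dist y a / R
  have hc0 : 0 < c := div_pos hya hR
  have hc1 : c ≤ 1 := (div_le_one hR).2 (mem_ball.1 hy).le
  have hmem : ∀ t, y ∈ ball a (t * R) ↔ t ∈ Ioi c := fun t => by
    rw [mem_ball, mem_Ioi, div_lt_iff₀ hR]
  have hindicator : ∀ t, (ball a (t * R)).indicator (fun z => (t ^ (n + 1))⁻¹ • g z) y
      = (Ioi c).indicator (fun t => (t ^ (n + 1))⁻¹ • g y) t := fun t => by
    by_cases h : t ∈ Ioi c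
    · rw [indicator_of_mem h, indicator_of_mem ((hmem t).2 h)]
    · rw [indicator_of_notMem h, indicator_of_notMem (mt (hmem t).1 h)]
  simp_rw [hindicator]
  rw [setIntegral_indicator measurableSet_Ioi, Ioc_inter_Ioi, max_eq_right hc0.le,
    ← intervalIntegral.integral_of_le hc1, intervalIntegral.integral_smul_const,
    integral_inv_pow_succ hn hc0 one_pos, one_pow, inv_one, div_pow, inv_div]

end Kernel

section Segment

variable {E F : Type*} [NormedAddCommGroup E] [NormedSpace ℝ E]
  [NormedAddCommGroup F] [NormedSpace ℝ F] [CompleteSpace F]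

theorem sub_eq_integral_fderiv_segment {u : E → F} (hu : ContDiff ℝ 1 u) (a x : E) :
    u a - u x = ∫ t in (0:ℝ)..1, fderiv ℝ u (a + t • (x - a)) (a - x) := by
  have hγ : ∀ t : ℝ, HasDerivAt (fun s : ℝ => a + s • (x - a)) (x - a) t := fun t => by
    simpa using ((hasDerivAt_id t).smul_const (x - a)).const_add a
  have hderiv : ∀ t : ℝ, HasDerivAt (fun s : ℝ => u (a + s • (x - a)))
      (fderiv ℝ u (a + t • (x - a)) (x - a)) t := fun t =>
    ((hu.differentiable one_ne_zero).differentiableAt.hasFDerivAt).comp_hasDerivAt t (hγ t)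
  have hcont : Continuous fun t : ℝ => fderiv ℝ u (a + t • (x - a)) (x - a) := by
    have := hu.continuous_fderiv one_ne_zero
    fun_prop
  have hftc := intervalIntegral.integral_eq_sub_of_hasDerivAt (fun t _ => hderiv t)
    (hcont.intervalIntegrable 0 1)
  rw [← neg_sub x a]
  simp only [map_neg, intervalIntegral.integral_neg, hftc]
  simp

end Segment

section Haar

variable {E F : Type*} [NormedAddCommGroup E] [NormedSpace ℝ E] [FiniteDimensional ℝ E]
  [MeasurableSpace E] [BorelSpace E] (μ : Measure E) [μ.IsAddHaarMeasure]
  [NormedAddCommGroup F] [NormedSpace ℝ F]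

theorem setIntegral_ball_comp_homothety (f : E → F) (a : E) (R : ℝ) {t : ℝ} (ht : 0 < t) :
    ∫ x in ball a R, f (a + t • (x - a)) ∂μ
      = (t ^ finrank ℝ E)⁻¹ • ∫ y in ball a (t * R), f y ∂μ := by
  have htranslate : ∀ (g : E → F) (r : ℝ),
      ∫ x in ball a r, g x ∂μ = ∫ x in ball 0 r, g (a + x) ∂μ := fun g r => by
    rw [← (measurePreserving_add_left μ a).setIntegral_preimage_emb
      (measurableEmbedding_addLeft a), preimage_add_left_ball, neg_add_cancel]
  simp_rw [htranslate, add_sub_cancel_left]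
  rw [Measure.setIntegral_comp_smul_of_pos μ (fun y => f (a + y)) _ ht,
    _root_.smul_ball ht.ne', smul_zero, Real.norm_of_nonneg ht.le]

theorem measureReal_ball_mul (a : E) {t : ℝ} (ht : 0 < t) (R : ℝ) :
    μ.real (ball a (t * R)) = t ^ finrank ℝ E * μ.real (ball a R) := by
  rw [measureReal_def, Measure.addHaar_ball_mul_of_pos μ a ht, ENNReal.toReal_mul,
    ENNReal.toReal_ofReal (by positivity), ← Measure.addHaar_ball_center μ a, measureReal_def]

theorem integrable_indicator_ball_inv_pow_succ {g : E → F} (hg : StronglyMeasurable g) {C : ℝ}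
    (hC : 0 ≤ C) (a : E) {R : ℝ} (hR : 0 ≤ R) (hgC : ∀ y ∈ ball a R, ‖g y‖ ≤ C * dist y a) :
    Integrable (Function.uncurry fun t y =>
        (ball a (t * R)).indicator (fun z => (t ^ (finrank ℝ E + 1))⁻¹ • g z) y)
      ((volume.restrict (Ioc (0:ℝ) 1)).prod (μ.restrict (ball a R))) := by
  set d := finrank ℝ E
  have : IsFiniteMeasure (μ.restrict (ball a R)) :=
    isFiniteMeasure_restrict.2 measure_ball_lt_top.ne
  have hmeas : StronglyMeasurable (Function.uncurry fun t y =>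
      (ball a (t * R)).indicator (fun z => (t ^ (d + 1))⁻¹ • g z) y) := by
    have hS : MeasurableSet {p : ℝ × E | dist p.2 a < p.1 * R} :=
      (isOpen_lt (by fun_prop) (by fun_prop)).measurableSet
    exact ((measurable_fst.pow_const _).inv.stronglyMeasurable.smul
      (hg.comp_measurable measurable_snd)).indicator hS
  have hbound : ∀ t ∈ Ioc (0:ℝ) 1, ∀ y ∈ ball a R,
      ‖(ball a (t * R)).indicator (fun z => (t ^ (d + 1))⁻¹ • g z) y‖
        ≤ (ball a (t * R)).indicator (fun _ => C * R * (t ^ d)⁻¹) y := by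
    intro t ht y hy
    have ht0 : 0 < t := ht.1
    by_cases hyt : y ∈ ball a (t * R)
    · rw [indicator_of_mem hyt, indicator_of_mem hyt, norm_smul,
        Real.norm_of_nonneg (by positivity)]
      calc (t ^ (d + 1))⁻¹ * ‖g y‖ ≤ (t ^ (d + 1))⁻¹ * (C * (t * R)) := by
            gcongr
            exact (hgC y hy).trans (mul_le_mul_of_nonneg_left (mem_ball.1 hyt).le hC)
        _ = C * R * (t ^ d)⁻¹ := by
            field_simp
            ring
    · simp [indicator_of_notMem hyt]
  refine (integrable_prod_iff hmeas.aestronglyMeasurable).2 ⟨?_, ?_⟩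
  · filter_upwards [ae_restrict_mem measurableSet_Ioc] with t ht
    refine (integrable_const (C * R * (t ^ d)⁻¹)).mono'
      (hmeas.comp_measurable measurable_prodMk_left).aestronglyMeasurable ?_
    filter_upwards [ae_restrict_mem measurableSet_ball] with y hy
    have ht0 : 0 < t := ht.1
    exact (hbound t ht y hy).trans (indicator_le_self' (fun _ _ => by positivity) y)
  · refine (integrable_const (C * R * μ.real (ball a R))).mono'
      hmeas.norm.aestronglyMeasurable.integral_prod_right' ?_
    filter_upwards [ae_restrict_mem measurableSet_Ioc] with t ht
    rw [Real.norm_of_nonneg (integral_nonneg fun _ => norm_nonneg _)]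
    calc ∫ y in ball a R, ‖(ball a (t * R)).indicator (fun z => (t ^ (d + 1))⁻¹ • g z) y‖ ∂μ
        ≤ ∫ y in ball a R, (ball a (t * R)).indicator (fun _ => C * R * (t ^ d)⁻¹) y ∂μ :=
          integral_mono_of_nonneg (.of_forall fun _ => norm_nonneg _)
            ((integrable_const _).indicator measurableSet_ball)
            ((ae_restrict_iff' measurableSet_ball).2 (.of_forall (hbound t ht)))
      _ = C * R * μ.real (ball a R) := by
          rw [setIntegral_indicator measurableSet_ball, setIntegral_const,
            inter_eq_right.2 (ball_subset_ball (mul_le_of_le_one_left hR ht.2)),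
            measureReal_ball_mul μ a ht.1, smul_eq_mul]
          have := ht.1.ne'
          field_simp
          ring

theorem setIntegral_ball_fderiv_homothety (u : E → F) (a : E) {R t : ℝ} (hR : 0 ≤ R)
    (ht : t ∈ Ioc (0:ℝ) 1) :
    ∫ x in ball a R, fderiv ℝ u (a + t • (x - a)) (a - x) ∂μ
      = ∫ y in ball a R, (ball a (t * R)).indicator
          (fun z => (t ^ (finrank ℝ E + 1))⁻¹ • fderiv ℝ u z (a - z)) y ∂μ := by
  have ht0 : t ≠ 0 := ht.1.ne'
  have hscale : ∀ x, fderiv ℝ u (a + t • (x - a)) (a - x)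
      = t⁻¹ • fderiv ℝ u (a + t • (x - a)) (a - (a + t • (x - a))) := fun x => by
    rw [show a - (a + t • (x - a)) = t • (a - x) by module, map_smul, inv_smul_smul₀ ht0]
  simp_rw [hscale]
  rw [integral_smul, setIntegral_ball_comp_homothety μ (fun z => fderiv ℝ u z (a - z)) a R ht.1,
    setIntegral_indicator measurableSet_ball,
    inter_eq_right.2 (ball_subset_ball (mul_le_of_le_one_left hR ht.2)), integral_smul,
    smul_smul, pow_succ, mul_inv, mul_comm]

theorem integral_ball_sub_eq [Nontrivial E] [CompleteSpace F] {u : E → F} (hu : ContDiff ℝ 1 u)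
    (a : E) {R : ℝ} (hR : 0 < R) :
    ∫ x in ball a R, (u a - u x) ∂μ
      = (1 / finrank ℝ E : ℝ) • ∫ x in ball a R,
          (R ^ finrank ℝ E / ‖a - x‖ ^ finrank ℝ E - 1) • fderiv ℝ u x (a - x) ∂μ := by
  set d := finrank ℝ E
  set g : E → F := fun z => fderiv ℝ u z (a - z)
  have hDu : Continuous (fderiv ℝ u) := hu.continuous_fderiv one_ne_zero
  obtain ⟨C, hC⟩ : ∃ C, ∀ y ∈ closedBall a R, ‖fderiv ℝ u y‖ ≤ C :=
    (isCompact_closedBall a R).exists_bound_of_continuousOn hDu.continuousOn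
  have hC0 : 0 ≤ C := (norm_nonneg _).trans (hC a (mem_closedBall_self hR.le))
  have hgC : ∀ y ∈ ball a R, ‖g y‖ ≤ C * dist y a := fun y hy => by
    rw [dist_comm, dist_eq_norm]
    exact (fderiv ℝ u y).le_of_opNorm_le (hC y (ball_subset_closedBall hy)) _
  have hsegment : Integrable (Function.uncurry fun x t => fderiv ℝ u (a + t • (x - a)) (a - x))
      ((μ.restrict (ball a R)).prod (volume.restrict (Ioc (0:ℝ) 1))) := by
    rw [Measure.prod_restrict]
    have hcont : Continuous fun p : E × ℝ => fderiv ℝ u (a + p.2 • (p.1 - a)) (a - p.1) := by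
      fun_prop
    exact (hcont.continuousOn.integrableOn_compact
      ((isCompact_closedBall a R).prod isCompact_Icc)).mono_set
      (prod_mono ball_subset_closedBall Ioc_subset_Icc_self)
  calc ∫ x in ball a R, (u a - u x) ∂μ
      = ∫ x in ball a R, (∫ t in Ioc (0:ℝ) 1, fderiv ℝ u (a + t • (x - a)) (a - x)) ∂μ := by
        simp_rw [sub_eq_integral_fderiv_segment hu a, intervalIntegral.integral_of_le zero_le_one]
    _ = ∫ t in Ioc (0:ℝ) 1, ∫ x in ball a R, fderiv ℝ u (a + t • (x - a)) (a - x) ∂μ :=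
        integral_integral_swap hsegment
    _ = ∫ t in Ioc (0:ℝ) 1, ∫ y in ball a R,
          (ball a (t * R)).indicator (fun z => (t ^ (d + 1))⁻¹ • g z) y ∂μ :=
        setIntegral_congr_fun measurableSet_Ioc fun t ht =>
          setIntegral_ball_fderiv_homothety μ u a hR.le ht
    _ = ∫ y in ball a R, (∫ t in Ioc (0:ℝ) 1,
          (ball a (t * R)).indicator (fun z => (t ^ (d + 1))⁻¹ • g z) y) ∂μ :=
        integral_integral_swap (integrable_indicator_ball_inv_pow_succ μ
          (by fun_prop : Continuous g).stronglyMeasurable hC0 a hR.le hgC)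
    _ = ∫ y in ball a R, ((R ^ d / dist y a ^ d - 1) / d) • g y ∂μ := by
        refine integral_congr_ae ?_
        filter_upwards [ae_restrict_of_ae ((countable_singleton a).ae_notMem μ),
          ae_restrict_mem measurableSet_ball] with y hya hy
        exact integral_Ioc_indicator_ball_inv_pow_succ finrank_pos.ne' g hR hy (dist_pos.2 hya)
    _ = _ := by
        rw [← integral_smul]
        simp only [g, dist_comm _ a, dist_eq_norm, smul_smul, one_div, inv_mul_eq_div]

theorem sub_setAverage_ball_eq [Nontrivial E] [CompleteSpace F] {u : E → F}
    (hu : ContDiff ℝ 1 u) (a : E) {R : ℝ} (hR : 0 < R) :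
    u a - ⨍ x in ball a R, u x ∂μ
      = (1 / finrank ℝ E : ℝ) • ⨍ x in ball a R,
          (R ^ finrank ℝ E / ‖a - x‖ ^ finrank ℝ E - 1) • fderiv ℝ u x (a - x) ∂μ := by
  have hB : μ.real (ball a R) ≠ 0 :=
    (measureReal_ne_zero_iff measure_ball_lt_top.ne).2 (measure_ball_pos μ a hR).ne'
  have hsub : ∫ x in ball a R, (u a - u x) ∂μ
      = μ.real (ball a R) • u a - ∫ x in ball a R, u x ∂μ := by
    have : IsFiniteMeasure (μ.restrict (ball a R)) :=
      isFiniteMeasure_restrict.2 measure_ball_lt_top.ne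
    rw [integral_sub (integrable_const (u a))
      ((hu.continuous.continuousOn.integrableOn_compact (isCompact_closedBall a R)).mono_set
        ball_subset_closedBall), setIntegral_const]
  rw [setAverage_eq, setAverage_eq, smul_comm, ← integral_ball_sub_eq μ hu a hR, hsub, smul_sub,
    inv_smul_smul₀ hB]

end Haar

theorem sobolev_formula_ball
    (n : ℕ) (hn : 1 ≤ n) (u : EuclideanSpace ℝ (Fin n) → ℝ)
    (hu : ContDiff ℝ 1 u) (a : EuclideanSpace ℝ (Fin n)) (R : ℝ) (hR : 0 < R) :
    u a - ⨍ x in ball a R, u x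
      = (1 / n) * ⨍ x in ball a R,
          (fderiv ℝ u x) (a - x) * (R ^ n / ‖a - x‖ ^ n - 1) := by
  have : Nontrivial (EuclideanSpace ℝ (Fin n)) :=
    finrank_pos_iff.1 (by rw [finrank_euclideanSpace_fin]; exact hn)
  rw [sub_setAverage_ball_eq volume hu a hR, finrank_euclideanSpace_fin, smul_eq_mul]
  simp_rw [smul_eq_mul, mul_comm]
end

section
/- Let C ⊆ ℝⁿ be a compact convex set with nonempty interior, a ∈ C, and u : ℝⁿ → ℝ be C¹ on a neighborhood of C. Then u(a) − ⨍_C u = (1/n) ⨍_C Du(x)[a − x] (γ(x)^{-n} − 1) dx, where γ is the Minkowski gauge of C centered at a. -/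
/-!
Integrate `u a - u x = ∫₀¹ Du(a + t • (x - a)) (a - x) dt` over `C` and exchange the integrals.
For fixed `t`, the substitution `y = a + t • (x - a)` has Jacobian `tⁿ`, turns `a - x` into
`t⁻¹ • (a - y)`, and maps `C` onto `a + t • (C - a)`, which for `t ≤ 1` is `{y ∈ C | γ y ≤ t}`
by convexity. Exchanging the integrals once more, `Du(y) (a - y)` gets the weight
`∫_{γ y}^1 t^(-n-1) dt = (γ y ^ (-n) - 1) / n`.
-/

open MeasureTheory Set Metric Module Filter
open scoped Pointwise

section Dilation
variable {E : Type*} [NormedAddCommGroup E] [NormedSpace ℝ E] {C : Set E} {a x : E} {s t R : ℝ}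

theorem Convex.add_inv_smul_sub_mem_of_le (hC : Convex ℝ C) (ha : a ∈ C) (hs : 0 < s)
    (hst : s ≤ t) (hx : a + s⁻¹ • (x - a) ∈ C) : a + t⁻¹ • (x - a) ∈ C := by
  have ht : 0 < t := hs.trans_le hst
  convert hC.add_smul_sub_mem ha hx ⟨by positivity, (div_le_one ht).2 hst⟩ using 2
  rw [add_sub_cancel_left, smul_smul]
  field_simp

theorem norm_sub_le_mul_of_add_inv_smul_sub_mem (hCR : C ⊆ closedBall a R) (ht : 0 < t)
    (hx : a + t⁻¹ • (x - a) ∈ C) : ‖x - a‖ ≤ t * R := by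
  have h := mem_closedBall_iff_norm.1 (hCR hx)
  rw [add_sub_cancel_left, norm_smul, norm_inv, Real.norm_of_nonneg ht.le,
    inv_mul_le_iff₀ ht] at h
  exact h

theorem Convex.mem_of_add_inv_smul_sub_mem (hC : Convex ℝ C) (ha : a ∈ C) (ht : t ∈ Ioc 0 1)
    (hx : a + t⁻¹ • (x - a) ∈ C) : x ∈ C := by
  simpa using hC.add_inv_smul_sub_mem_of_le ha ht.1 ht.2 hx

noncomputable def centeredGauge (C : Set E) (a x : E) : ℝ :=
  sInf {l : ℝ | 0 < l ∧ a + l⁻¹ • (x - a) ∈ C}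

theorem centeredGauge_le (ht : 0 < t) (hx : a + t⁻¹ • (x - a) ∈ C) : centeredGauge C a x ≤ t :=
  csInf_le ⟨0, fun _ hl => hl.1.le⟩ ⟨ht, hx⟩

theorem centeredGauge_le_one (hx : x ∈ C) : centeredGauge C a x ≤ 1 :=
  centeredGauge_le one_pos (by simpa using hx)

theorem Convex.add_inv_smul_sub_mem_of_centeredGauge_lt (hC : Convex ℝ C) (ha : a ∈ C) (hx : x ∈ C)
    (h : centeredGauge C a x < t) : a + t⁻¹ • (x - a) ∈ C := by
  obtain ⟨s, ⟨hs, hsx⟩, hst⟩ :=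
    exists_lt_of_csInf_lt (s := {l : ℝ | 0 < l ∧ a + l⁻¹ • (x - a) ∈ C})
      ⟨1, one_pos, by simpa using hx⟩ h
  exact hC.add_inv_smul_sub_mem_of_le ha hs hst.le hsx

theorem centeredGauge_pos (hCR : C ⊆ closedBall a R) (hx : x ∈ C) (hxa : x ≠ a) :
    0 < centeredGauge C a x := by
  have hxa' : 0 < ‖x - a‖ := norm_pos_iff.2 (sub_ne_zero.2 hxa)
  have hR : 0 < R := by
    have := norm_sub_le_mul_of_add_inv_smul_sub_mem hCR one_pos (by simpa using hx)
    linarith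
  refine lt_of_lt_of_le (by positivity : 0 < ‖x - a‖ / R)
    (le_csInf ⟨1, one_pos, by simpa using hx⟩ ?_)
  rintro l ⟨hl, hlx⟩
  exact div_le_of_le_mul₀ hR.le hl.le (norm_sub_le_mul_of_add_inv_smul_sub_mem hCR hl hlx)

end Dilation

section ChangeOfVariables
variable {E : Type*} [NormedAddCommGroup E] [NormedSpace ℝ E] [MeasurableSpace E] [BorelSpace E]
  [FiniteDimensional ℝ E] (μ : Measure E) [μ.IsAddHaarMeasure]
  {F : Type*} [NormedAddCommGroup F] [NormedSpace ℝ F]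

theorem setIntegral_comp_add_smul_sub_of_pos (f : E → F) (s : Set E) (a : E) {t : ℝ} (ht : 0 < t) :
    ∫ x in s, f (a + t • (x - a)) ∂μ
      = (t ^ finrank ℝ E)⁻¹ • ∫ y in {y | a + t⁻¹ • (y - a) ∈ s}, f y ∂μ := by
  have hsub := (measurePreserving_sub_right μ a).setIntegral_preimage_emb (E := F)
    (MeasurableEquiv.subRight a).measurableEmbedding
  calc ∫ x in s, f (a + t • (x - a)) ∂μ
      = ∫ z in {z | z + a ∈ s}, f (a + t • z) ∂μ := by
        simpa using hsub (fun z => f (a + t • z)) {z | z + a ∈ s}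
    _ = (t ^ finrank ℝ E)⁻¹ • ∫ z in t • {z | z + a ∈ s}, f (a + z) ∂μ :=
        Measure.setIntegral_comp_smul_of_pos μ (fun z => f (a + z)) _ ht
    _ = (t ^ finrank ℝ E)⁻¹ • ∫ y in {y | a + t⁻¹ • (y - a) ∈ s}, f y ∂μ := by
        have hset : (· - a) ⁻¹' (t • {z | z + a ∈ s}) = {y | a + t⁻¹ • (y - a) ∈ s} := by
          ext y
          simp [mem_smul_set_iff_inv_smul_mem₀ ht.ne', add_comm]
        rw [← hsub, hset]
        simp

theorem measureReal_setOf_add_inv_smul_sub_mem (s : Set E) (a : E) {t : ℝ} (ht : 0 < t) :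
    μ.real {y | a + t⁻¹ • (y - a) ∈ s} = t ^ finrank ℝ E * μ.real s := by
  have := setIntegral_comp_add_smul_sub_of_pos μ (fun _ => (1 : ℝ)) s a ht
  simp only [setIntegral_const, smul_eq_mul, mul_one] at this
  rw [this, mul_inv_cancel_left₀ (by positivity)]

end ChangeOfVariables

theorem ContDiffOn.sub_eq_integral_fderiv_add_smul_sub
    {E F : Type*} [NormedAddCommGroup E] [NormedSpace ℝ E]
    [NormedAddCommGroup F] [NormedSpace ℝ F] [CompleteSpace F]
    {u : E → F} {U : Set E} (hU : IsOpen U) (hu : ContDiffOn ℝ 1 u U) {a x : E}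
    (hseg : ∀ t ∈ Icc (0 : ℝ) 1, a + t • (x - a) ∈ U) :
    u a - u x = ∫ t in Ioc (0 : ℝ) 1, fderiv ℝ u (a + t • (x - a)) (a - x) := by
  have hderiv : ∀ t ∈ uIcc (0 : ℝ) 1, HasDerivAt (fun s : ℝ => u (a + s • (x - a)))
      (fderiv ℝ u (a + t • (x - a)) (x - a)) t := by
    intro t ht
    rw [uIcc_of_le zero_le_one] at ht
    have hdiff := (hu.differentiableOn one_ne_zero).differentiableAt (hU.mem_nhds (hseg t ht))
    have hline : HasDerivAt (fun s : ℝ => a + s • (x - a)) (x - a) t := by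
      simpa using ((hasDerivAt_id t).smul_const (x - a)).const_add a
    exact hdiff.hasFDerivAt.comp_hasDerivAt t hline
  have hcont : ContinuousOn (fun t : ℝ => fderiv ℝ u (a + t • (x - a)) (x - a)) (uIcc 0 1) := by
    rw [uIcc_of_le zero_le_one]
    exact ((hu.continuousOn_fderiv_of_isOpen hU le_rfl).comp (by fun_prop) hseg).clm_apply
      continuousOn_const
  have hftc := intervalIntegral.integral_eq_sub_of_hasDerivAt hderiv hcont.intervalIntegrable
  calc u a - u x = -(∫ t in (0 : ℝ)..1, fderiv ℝ u (a + t • (x - a)) (x - a)) := by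
        rw [hftc]; simp
    _ = ∫ t in (0 : ℝ)..1, fderiv ℝ u (a + t • (x - a)) (a - x) := by
        simp only [← intervalIntegral.integral_neg, ← map_neg, neg_sub]
    _ = _ := intervalIntegral.integral_of_le zero_le_one

theorem integral_inv_pow_succ_s4 {d : ℕ} (hd : d ≠ 0) {g : ℝ} (hg : 0 < g) :
    ∫ t in g..1, (t ^ (d + 1))⁻¹ = ((g ^ d)⁻¹ - 1) / d := by
  have h0 : (0 : ℝ) ∉ uIcc g 1 := by
    rw [mem_uIcc]; rintro (h | h) <;> linarith [h.1]
  have hzpow : ∀ t : ℝ, (t ^ (d + 1))⁻¹ = t ^ (-(d + 1 : ℤ)) := fun t => by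
    rw [zpow_neg]; norm_cast
  simp_rw [hzpow]
  rw [integral_zpow (Or.inr ⟨by omega, h0⟩), show -(d + 1 : ℤ) + 1 = -(d : ℤ) by ring,
    zpow_neg, zpow_neg, zpow_natCast, zpow_natCast, one_pow, inv_one]
  push_cast
  rw [show -((d : ℝ) + 1) + 1 = -d by ring, div_neg, ← neg_div, neg_sub]

section DilationKernel
variable {E : Type*} [NormedAddCommGroup E] [NormedSpace ℝ E] {C : Set E} {a : E}

open Classical in
/-- With `φ y = L y (a - y)`, this is the integrand `L (a + t • (x - a)) (a - x)` after the
substitution `y = a + t • (x - a)`, including its Jacobian `t⁻ⁿ`. -/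
noncomputable def dilationKernel (C : Set E) (a : E) (φ : E → ℝ) (y : E) (t : ℝ) : ℝ :=
  if a + t⁻¹ • (y - a) ∈ C then φ y * (t ^ (finrank ℝ E + 1))⁻¹ else 0

theorem dilationKernel_eq_indicator (φ : E → ℝ) (y : E) (t : ℝ) :
    dilationKernel C a φ y t
      = {y | a + t⁻¹ • (y - a) ∈ C}.indicator (fun y => φ y * (t ^ (finrank ℝ E + 1))⁻¹) y :=
  rfl

theorem norm_dilationKernel_le (hconv : Convex ℝ C) (ha : a ∈ C) {R : ℝ}
    (hCR : C ⊆ closedBall a R) {φ : E → ℝ} {K : ℝ} (hK : 0 ≤ K)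
    (hφ : ∀ y ∈ C, ‖φ y‖ ≤ K * ‖y - a‖) {t : ℝ} (ht : t ∈ Ioc 0 1) (y : E) :
    ‖dilationKernel C a φ y t‖
      ≤ {y | a + t⁻¹ • (y - a) ∈ C}.indicator (fun _ => K * R * (t ^ finrank ℝ E)⁻¹) y := by
  rw [dilationKernel_eq_indicator]
  by_cases hy : y ∈ {y | a + t⁻¹ • (y - a) ∈ C}
  · rw [indicator_of_mem hy, indicator_of_mem hy, norm_mul, norm_inv, norm_pow,
      Real.norm_of_nonneg ht.1.le]
    have hφy : ‖φ y‖ ≤ K * (t * R) :=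
      (hφ y (hconv.mem_of_add_inv_smul_sub_mem ha ht hy)).trans
        (mul_le_mul_of_nonneg_left (norm_sub_le_mul_of_add_inv_smul_sub_mem hCR ht.1 hy) hK)
    calc ‖φ y‖ * (t ^ (finrank ℝ E + 1))⁻¹
        ≤ K * (t * R) * (t ^ (finrank ℝ E + 1))⁻¹ :=
          mul_le_mul_of_nonneg_right hφy (by have := ht.1; positivity)
      _ = K * R * (t ^ finrank ℝ E)⁻¹ := by
          have := ht.1.ne'
          field_simp
          ring
  · rw [indicator_of_notMem hy, indicator_of_notMem hy, norm_zero]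

theorem setIntegral_Ioc_dilationKernel [FiniteDimensional ℝ E] [Nontrivial E]
    (hCb : Bornology.IsBounded C) (hconv : Convex ℝ C) (ha : a ∈ C) (φ : E → ℝ) {y : E}
    (hy : y ∈ C) (hya : y ≠ a) :
    ∫ t in Ioc (0 : ℝ) 1, dilationKernel C a φ y t
      = (finrank ℝ E : ℝ)⁻¹ * (φ y * (1 / centeredGauge C a y ^ finrank ℝ E - 1)) := by
  set g := centeredGauge C a y
  obtain ⟨R, hCR⟩ := hCb.subset_closedBall a
  have hg0 : 0 < g := centeredGauge_pos hCR hy hya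
  -- Without closedness of `C` the case `t = g` is undecided, but it is a null set.
  have hmem : ∀ t ∈ Ioc (0 : ℝ) 1, t ≠ g → (a + t⁻¹ • (y - a) ∈ C ↔ t ∈ Ioi g) :=
    fun t ht hne => ⟨fun h => (centeredGauge_le ht.1 h).lt_of_ne hne.symm,
      hconv.add_inv_smul_sub_mem_of_centeredGauge_lt ha hy⟩
  calc ∫ t in Ioc (0 : ℝ) 1, dilationKernel C a φ y t
      = ∫ t in Ioc (0 : ℝ) 1,
          (Ioi g).indicator (fun t => φ y * (t ^ (finrank ℝ E + 1))⁻¹) t := by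
        refine integral_congr_ae ?_
        filter_upwards [ae_restrict_mem measurableSet_Ioc,
          ae_restrict_of_ae (Measure.ae_ne volume g)] with t ht hne
        simp only [dilationKernel, indicator_apply, hmem t ht hne]
    _ = φ y * ∫ t in g..1, (t ^ (finrank ℝ E + 1))⁻¹ := by
        rw [integral_indicator measurableSet_Ioi, Measure.restrict_restrict measurableSet_Ioi,
          inter_comm, Ioc_inter_Ioi, max_eq_right hg0.le, integral_const_mul,
          intervalIntegral.integral_of_le (centeredGauge_le_one hy)]
    _ = _ := by
        rw [integral_inv_pow_succ_s4 finrank_pos.ne' hg0]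
        ring

variable [MeasurableSpace E] [BorelSpace E] [FiniteDimensional ℝ E] (μ : Measure E)
  [μ.IsAddHaarMeasure]

theorem measurable_dilationKernel (hC : MeasurableSet C) {φ : E → ℝ} (hφ : Measurable φ) :
    Measurable (Function.uncurry (dilationKernel C a φ)) := by
  refine Measurable.ite ?_ (by fun_prop) measurable_const
  exact (by fun_prop : Measurable fun p : E × ℝ => a + p.2⁻¹ • (p.1 - a)) hC

theorem integrable_dilationKernel (hC : IsCompact C) (hconv : Convex ℝ C) (ha : a ∈ C)
    {φ : E → ℝ} (hφm : Measurable φ) {K : ℝ} (hK : 0 ≤ K)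
    (hφ : ∀ y ∈ C, ‖φ y‖ ≤ K * ‖y - a‖) :
    Integrable (Function.uncurry (dilationKernel C a φ))
      ((μ.restrict C).prod (volume.restrict (Ioc (0 : ℝ) 1))) := by
  obtain ⟨R, hCR⟩ := hC.isBounded.subset_closedBall a
  have hR : 0 ≤ R := nonempty_closedBall.1 ⟨a, hCR ha⟩
  have : IsFiniteMeasure (μ.restrict C) := isFiniteMeasure_restrict.2 hC.measure_lt_top.ne
  have : IsFiniteMeasure (volume.restrict (Ioc (0 : ℝ) 1)) :=
    isFiniteMeasure_restrict.2 measure_Ioc_lt_top.ne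
  have hCm := hC.isClosed.measurableSet
  have hm := measurable_dilationKernel hCm hφm (a := a)
  refine (integrable_prod_iff' hm.aestronglyMeasurable).2 ⟨?_, ?_⟩
  · filter_upwards [ae_restrict_mem measurableSet_Ioc] with t ht
    refine Integrable.of_bound (hm.comp measurable_prodMk_right).aestronglyMeasurable
      (K * R * (t ^ finrank ℝ E)⁻¹) (Eventually.of_forall fun y => ?_)
    exact (norm_dilationKernel_le hconv ha hCR hK hφ ht y).trans
      (indicator_le_self' (fun _ _ => by have := ht.1; positivity) y)
  · refine Integrable.of_bound
      (hm.norm.stronglyMeasurable.integral_prod_left').aestronglyMeasurable (K * R * μ.real C) ?_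
    filter_upwards [ae_restrict_mem measurableSet_Ioc] with t ht
    have hEt : MeasurableSet {y | a + t⁻¹ • (y - a) ∈ C} :=
      (by fun_prop : Measurable fun y : E => a + t⁻¹ • (y - a)) hCm
    have hEtC : {y | a + t⁻¹ • (y - a) ∈ C} ⊆ C := fun y => hconv.mem_of_add_inv_smul_sub_mem ha ht
    rw [Real.norm_of_nonneg (integral_nonneg fun _ => norm_nonneg _)]
    calc ∫ y, ‖dilationKernel C a φ y t‖ ∂μ.restrict C
        ≤ ∫ y, {y | a + t⁻¹ • (y - a) ∈ C}.indicator (fun _ => K * R * (t ^ finrank ℝ E)⁻¹) y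
            ∂μ.restrict C :=
          integral_mono_of_nonneg (Eventually.of_forall fun _ => norm_nonneg _)
            ((integrable_const _).indicator hEt)
            (Eventually.of_forall (norm_dilationKernel_le hconv ha hCR hK hφ ht))
      _ = K * R * μ.real C := by
          rw [integral_indicator_const _ hEt, measureReal_restrict_apply hEt,
            inter_eq_self_of_subset_left hEtC,
            measureReal_setOf_add_inv_smul_sub_mem μ C a ht.1, smul_eq_mul]
          have := ht.1.ne'
          field_simp

theorem setIntegral_apply_add_smul_sub_eq_setIntegral_dilationKernel (hCm : MeasurableSet C)
    (hconv : Convex ℝ C) (ha : a ∈ C) (L : E → E →L[ℝ] ℝ) {t : ℝ} (ht : t ∈ Ioc 0 1) :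
    ∫ x in C, L (a + t • (x - a)) (a - x) ∂μ
      = ∫ y in C, dilationKernel C a (fun y => L y (a - y)) y t ∂μ := by
  have ht0 := ht.1.ne'
  have hEt : MeasurableSet {y | a + t⁻¹ • (y - a) ∈ C} :=
    (by fun_prop : Measurable fun y : E => a + t⁻¹ • (y - a)) hCm
  have hEtC : {y | a + t⁻¹ • (y - a) ∈ C} ⊆ C := fun y => hconv.mem_of_add_inv_smul_sub_mem ha ht
  have hL : ∀ x, L (a + t • (x - a)) (a - x)
      = t⁻¹ * L (a + t • (x - a)) (a - (a + t • (x - a))) := fun x => by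
    rw [sub_add_cancel_left, ← smul_neg, neg_sub, map_smul, smul_eq_mul, inv_mul_cancel_left₀ ht0]
  simp_rw [hL, dilationKernel_eq_indicator]
  rw [integral_const_mul, setIntegral_comp_add_smul_sub_of_pos μ (fun y => L y (a - y)) C a ht.1,
    integral_indicator hEt, Measure.restrict_restrict hEt, inter_eq_self_of_subset_left hEtC,
    integral_mul_const, smul_eq_mul, pow_succ, mul_inv]
  ring

end DilationKernel

section SobolevFormula
variable {E : Type*} [NormedAddCommGroup E] [NormedSpace ℝ E] [MeasurableSpace E] [BorelSpace E]
  [FiniteDimensional ℝ E] {C U : Set E} {a : E} {u : E → ℝ}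

theorem Measurable.fderiv_apply (u : E → ℝ) {α : Type*} [MeasurableSpace α] {f g : α → E}
    (hf : Measurable f) (hg : Measurable g) : Measurable fun x => fderiv ℝ u (f x) (g x) :=
  isBoundedBilinearMap_apply.continuous.measurable2 ((measurable_fderiv ℝ u).comp hf) hg

theorem setIntegral_sub_eq_integral_setIntegral_fderiv (μ : Measure E)
    [IsFiniteMeasureOnCompacts μ] (hC : IsCompact C) (hconv : Convex ℝ C) (ha : a ∈ C)
    (hU : IsOpen U) (hCU : C ⊆ U) (hu : ContDiffOn ℝ 1 u U) :
    ∫ x in C, (u a - u x) ∂μ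
      = ∫ t in Ioc (0 : ℝ) 1, ∫ x in C, fderiv ℝ u (a + t • (x - a)) (a - x) ∂μ := by
  have hCm := hC.isClosed.measurableSet
  have : IsFiniteMeasure (μ.restrict C) := isFiniteMeasure_restrict.2 hC.measure_lt_top.ne
  have : IsFiniteMeasure (volume.restrict (Ioc (0 : ℝ) 1)) :=
    isFiniteMeasure_restrict.2 measure_Ioc_lt_top.ne
  obtain ⟨M, hM⟩ := hC.exists_bound_of_continuousOn
    ((hu.continuousOn_fderiv_of_isOpen hU le_rfl).mono hCU)
  obtain ⟨R, hCR⟩ := hC.isBounded.subset_closedBall a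
  have hbound : ∀ p ∈ C ×ˢ Ioc (0 : ℝ) 1,
      ‖fderiv ℝ u (a + p.2 • (p.1 - a)) (a - p.1)‖ ≤ M * R := by
    rintro ⟨x, t⟩ ⟨hx, ht⟩
    calc ‖fderiv ℝ u (a + t • (x - a)) (a - x)‖
        ≤ ‖fderiv ℝ u (a + t • (x - a))‖ * ‖a - x‖ := ContinuousLinearMap.le_opNorm _ _
      _ ≤ M * R := by
        gcongr
        · exact (norm_nonneg _).trans (hM a ha)
        · exact hM _ (hconv.add_smul_sub_mem ha hx (Ioc_subset_Icc_self ht))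
        · rw [norm_sub_rev, ← dist_eq_norm]; exact hCR hx
  have hint : Integrable (fun p : E × ℝ => fderiv ℝ u (a + p.2 • (p.1 - a)) (a - p.1))
      ((μ.restrict C).prod (volume.restrict (Ioc (0 : ℝ) 1))) := by
    refine Integrable.of_bound
      (Measurable.fderiv_apply u (by fun_prop) (by fun_prop)).aestronglyMeasurable (M * R) ?_
    rw [Measure.prod_restrict]
    filter_upwards [ae_restrict_mem (hCm.prod measurableSet_Ioc)] using hbound
  calc ∫ x in C, (u a - u x) ∂μ
      = ∫ x in C, (∫ t in Ioc (0 : ℝ) 1, fderiv ℝ u (a + t • (x - a)) (a - x)) ∂μ :=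
        setIntegral_congr_fun hCm fun x hx => hu.sub_eq_integral_fderiv_add_smul_sub hU
          fun t ht => hCU (hconv.add_smul_sub_mem ha hx ht)
    _ = _ := integral_integral_swap hint

theorem setIntegral_sub_eq_inv_finrank_mul_setIntegral (μ : Measure E)
    [μ.IsAddHaarMeasure] [Nontrivial E] (hC : IsCompact C) (hconv : Convex ℝ C) (ha : a ∈ C)
    (hU : IsOpen U) (hCU : C ⊆ U) (hu : ContDiffOn ℝ 1 u U) :
    ∫ x in C, (u a - u x) ∂μ = (finrank ℝ E : ℝ)⁻¹ *
      ∫ x in C, fderiv ℝ u x (a - x) * (1 / centeredGauge C a x ^ finrank ℝ E - 1) ∂μ := by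
  have hCm := hC.isClosed.measurableSet
  set φ : E → ℝ := fun y => fderiv ℝ u y (a - y)
  obtain ⟨M, hM⟩ := hC.exists_bound_of_continuousOn
    ((hu.continuousOn_fderiv_of_isOpen hU le_rfl).mono hCU)
  have hφ : ∀ y ∈ C, ‖φ y‖ ≤ M * ‖y - a‖ := fun y hy => by
    rw [← norm_sub_rev]
    exact (ContinuousLinearMap.le_opNorm _ _).trans (by gcongr; exact hM y hy)
  have hΨ := integrable_dilationKernel μ hC hconv ha
    (Measurable.fderiv_apply u measurable_id (by fun_prop)) ((norm_nonneg _).trans (hM a ha)) hφ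
  calc ∫ x in C, (u a - u x) ∂μ
      = ∫ t in Ioc (0 : ℝ) 1, ∫ x in C, fderiv ℝ u (a + t • (x - a)) (a - x) ∂μ :=
        setIntegral_sub_eq_integral_setIntegral_fderiv μ hC hconv ha hU hCU hu
    _ = ∫ t in Ioc (0 : ℝ) 1, ∫ y in C, dilationKernel C a φ y t ∂μ :=
        setIntegral_congr_fun measurableSet_Ioc fun t ht =>
          setIntegral_apply_add_smul_sub_eq_setIntegral_dilationKernel μ hCm hconv ha _ ht
    _ = ∫ y in C, (∫ t in Ioc (0 : ℝ) 1, dilationKernel C a φ y t) ∂μ :=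
        (integral_integral_swap hΨ).symm
    _ = ∫ y in C,
          (finrank ℝ E : ℝ)⁻¹ * (φ y * (1 / centeredGauge C a y ^ finrank ℝ E - 1)) ∂μ := by
        refine integral_congr_ae ?_
        filter_upwards [ae_restrict_mem hCm, ae_restrict_of_ae (Measure.ae_ne μ a)] with y hy hya
        exact setIntegral_Ioc_dilationKernel hC.isBounded hconv ha φ hy hya
    _ = _ := integral_const_mul _ _

end SobolevFormula

theorem sub_setAverage_eq_setAverage_sub {α F : Type*} [MeasurableSpace α] {μ : Measure α}
    {s : Set α} [NormedAddCommGroup F] [NormedSpace ℝ F] [CompleteSpace F]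
    (hs₀ : μ s ≠ 0) (hs : μ s ≠ ⊤) {f : α → F} (hf : IntegrableOn f s μ) (c : F) :
    c - ⨍ x in s, f x ∂μ = ⨍ x in s, (c - f x) ∂μ := by
  rw [setAverage_eq μ (fun x => c - f x), integral_sub (integrableOn_const hs (C := c)) hf,
    smul_sub, ← setAverage_eq, ← setAverage_eq, setAverage_const hs₀ hs]

theorem sobolev_formula_convex
    (n : ℕ) (hn : 1 ≤ n) (C : Set (EuclideanSpace ℝ (Fin n)))
    (hC : IsCompact C) (hconv : Convex ℝ C) (hint : (interior C).Nonempty)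
    (a : EuclideanSpace ℝ (Fin n)) (ha : a ∈ C)
    (γ : EuclideanSpace ℝ (Fin n) → ℝ)
    (hγ : ∀ x, γ x = sInf {l : ℝ | 0 < l ∧ a + l⁻¹ • (x - a) ∈ C})
    (u : EuclideanSpace ℝ (Fin n) → ℝ) (U : Set (EuclideanSpace ℝ (Fin n)))
    (hU : IsOpen U) (hCU : C ⊆ U) (hu : ContDiffOn ℝ 1 u U) :
    u a - ⨍ x in C, u x
      = (1 / n) * ⨍ x in C, (fderiv ℝ u x) (a - x) * (1 / γ x ^ n - 1) := by
  obtain rfl : γ = centeredGauge C a := funext hγ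
  have : Nonempty (Fin n) := ⟨⟨0, hn⟩⟩
  have key := setIntegral_sub_eq_inv_finrank_mul_setIntegral volume hC hconv ha hU hCU hu
  rw [finrank_euclideanSpace_fin] at key
  rw [sub_setAverage_eq_setAverage_sub (Measure.measure_pos_of_nonempty_interior _ hint).ne'
      hC.measure_lt_top.ne ((hu.continuousOn.mono hCU).integrableOn_compact hC),
    setAverage_eq, setAverage_eq, key, one_div, smul_eq_mul, smul_eq_mul, mul_left_comm]
end

section
/- Let S ⊆ ℝⁿ be a nondegenerate n-simplex with vertices a_0,…,a_n and barycentric coordinate functions β_0,…,β_n. For each i and each x ∈ S, the Minkowski gauge of S centered at a_i satisfies γ^S_{a_i}(x) = 1 − β_i(x). -/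
/-!
Affine independence of `a` together with the coordinates `β` make `a` an affine basis whose
coordinate functions are the `β i`; the simplex is then `{y | ∀ j, 0 ≤ β j y}`. The
barycentric coordinates are affine, so along the ray `a i + c • (x - a i)` the coordinate
`j ≠ i` is `c * β j x ≥ 0`, while the coordinate `i` is `1 - c * (1 - β i x)`. The point
therefore stays in the simplex exactly when `1 - β i x ≤ c⁻¹`, and the gauge is the least
such `c⁻¹`.
-/

open Set AffineMap

theorem affineSpan_range_eq_top_of_sum_smul_eq {ι k V : Type*} [Fintype ι] [Ring k]
    [Nontrivial k] [AddCommGroup V] [Module k V] {a : ι → V} {β : ι → V → k}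
    (hβ1 : ∀ x, ∑ i, β i x = 1) (hβ2 : ∀ x, ∑ i, β i x • a i = x) :
    affineSpan k (range a) = ⊤ := by
  refine eq_top_iff.2 fun x _ => ?_
  rw [← hβ2 x, ← Finset.univ.affineCombination_eq_linear_combination a _ (hβ1 x)]
  exact affineCombination_mem_affineSpan (hβ1 x) a

theorem Real.sInf_setOf_pos_and_le {t : ℝ} (ht : 0 ≤ t) :
    sInf {l : ℝ | 0 < l ∧ t ≤ l} = t := by
  rcases ht.eq_or_lt with rfl | ht
  · rw [show {l : ℝ | 0 < l ∧ 0 ≤ l} = Ioi 0 from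
      ext fun l => and_iff_left_of_imp le_of_lt, csInf_Ioi]
  · rw [show {l : ℝ | 0 < l ∧ t ≤ l} = Ici t from
      ext fun l => and_iff_right_of_imp ht.trans_le, csInf_Ici]

namespace AffineBasis

variable {ι k V : Type*} [AddCommGroup V]

theorem coord_eq_of_sum_smul_eq [Fintype ι] [Ring k] [Module k V] (b : AffineBasis ι k V)
    {w : ι → k} (hw1 : ∑ j, w j = 1) {x : V} (hw2 : ∑ j, w j • b j = x) (i : ι) :
    b.coord i x = w i := by
  rw [← hw2, ← Finset.univ.affineCombination_eq_linear_combination _ _ hw1]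
  exact b.coord_apply_combination_of_mem (Finset.mem_univ i) hw1

variable [Module ℝ V] (b : AffineBasis ι ℝ V)

theorem coord_le_one_of_mem_convexHull [Fintype ι] {x : V} (hx : x ∈ convexHull ℝ (range b))
    (i : ι) : b.coord i x ≤ 1 := by
  rw [convexHull_eq_nonneg_coord] at hx
  calc b.coord i x ≤ ∑ j, b.coord j x :=
        Finset.single_le_sum (fun j _ => hx j) (Finset.mem_univ i)
    _ = 1 := b.sum_coord_apply_eq_one x

theorem lineMap_mem_convexHull_iff {x : V} (hx : x ∈ convexHull ℝ (range b)) (i : ι)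
    {c : ℝ} (hc : 0 ≤ c) :
    lineMap (b i) x c ∈ convexHull ℝ (range b) ↔ c * (1 - b.coord i x) ≤ 1 := by
  rw [convexHull_eq_nonneg_coord] at hx ⊢
  simp only [mem_ofPred_eq, apply_lineMap] at hx ⊢
  simp only [lineMap_apply_module, smul_eq_mul]
  constructor
  · intro h
    have hi := h i
    rw [b.coord_apply_eq] at hi
    linarith
  · intro h j
    rcases eq_or_ne j i with rfl | hji
    · rw [b.coord_apply_eq]
      linarith
    · rw [b.coord_apply_ne hji, mul_zero, zero_add]
      exact mul_nonneg hc (hx j)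

theorem sInf_setOf_mem_convexHull_eq_one_sub_coord [Fintype ι] {x : V}
    (hx : x ∈ convexHull ℝ (range b)) (i : ι) :
    sInf {l : ℝ | 0 < l ∧ b i + l⁻¹ • (x - b i) ∈ convexHull ℝ (range b)} =
      1 - b.coord i x := by
  have hset : {l : ℝ | 0 < l ∧ b i + l⁻¹ • (x - b i) ∈ convexHull ℝ (range b)} =
      {l : ℝ | 0 < l ∧ 1 - b.coord i x ≤ l} := by
    ext l
    refine and_congr_right fun hl => ?_
    rw [← vsub_eq_sub, add_comm, ← vadd_eq_add, ← lineMap_apply,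
      b.lineMap_mem_convexHull_iff hx i (inv_nonneg.2 hl.le), inv_mul_le_iff₀ hl, mul_one]
  rw [hset, Real.sInf_setOf_pos_and_le (sub_nonneg.2 (b.coord_le_one_of_mem_convexHull hx i))]

end AffineBasis

theorem gauge_eq_one_sub_barycentric
    (n : ℕ) (a : Fin (n + 1) → EuclideanSpace ℝ (Fin n))
    (hind : AffineIndependent ℝ a)
    (S : Set (EuclideanSpace ℝ (Fin n))) (hS : S = convexHull ℝ (Set.range a))
    (β : Fin (n + 1) → EuclideanSpace ℝ (Fin n) → ℝ)
    (hβ1 : ∀ x, ∑ i, β i x = 1)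
    (hβ2 : ∀ x, ∑ i, β i x • a i = x)
    (γ : Fin (n + 1) → EuclideanSpace ℝ (Fin n) → ℝ)
    (hγ : ∀ i x, γ i x = sInf {l : ℝ | 0 < l ∧ a i + l⁻¹ • (x - a i) ∈ S}) :
    ∀ i, ∀ x ∈ S, γ i x = 1 - β i x := by
  intro i x hx
  subst hS
  let b : AffineBasis (Fin (n + 1)) ℝ (EuclideanSpace ℝ (Fin n)) :=
    ⟨a, hind, affineSpan_range_eq_top_of_sum_smul_eq hβ1 hβ2⟩
  rw [hγ, ← b.coord_eq_of_sum_smul_eq (hβ1 x) (hβ2 x) i]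
  exact b.sInf_setOf_mem_convexHull_eq_one_sub_coord hx i
end

section
/- Let S ⊆ ℝⁿ be a nondegenerate n-simplex of diameter at most d with vertices a_0,…,a_n, and let β_i be the barycentric coordinates. There exists a constant c > 0 depending only on S such that for every x in the interior of S and every i, 1 − β_i(x) ≥ c·|x − a_i|/d. -/
/-!
Barycentric coordinates of a point `x` of the simplex are nonnegative, so writing
`x - aᵢ = ∑ⱼ βⱼ(x) (aⱼ - aᵢ)` and bounding each edge `‖aⱼ - aᵢ‖` by the diameter `d` gives
`‖x - aᵢ‖ ≤ (1 - βᵢ(x)) d`. Hence `c = 1` works.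
-/

open Set Metric Finset

theorem norm_sum_smul_sub_le_one_sub_mul {ι E : Type*} [Fintype ι] [SeminormedAddCommGroup E]
    [NormedSpace ℝ E] {a : ι → E} {w : ι → ℝ} {d : ℝ} (hw0 : ∀ j, 0 ≤ w j)
    (hw1 : ∑ j, w j = 1) (i : ι) (hd : ∀ j, ‖a j - a i‖ ≤ d) :
    ‖∑ j, w j • a j - a i‖ ≤ (1 - w i) * d := by
  classical
  calc ‖∑ j, w j • a j - a i‖ = ‖∑ j, w j • (a j - a i)‖ := by
        simp only [smul_sub, sum_sub_distrib, ← sum_smul, hw1, one_smul]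
    _ ≤ ∑ j, w j * ‖a j - a i‖ :=
        norm_sum_le_of_le _ fun j _ => by rw [norm_smul, Real.norm_of_nonneg (hw0 j)]
    _ = ∑ j ∈ univ.erase i, w j * ‖a j - a i‖ := by
        rw [← add_sum_erase _ _ (mem_univ i), sub_self, norm_zero, mul_zero, zero_add]
    _ ≤ ∑ j ∈ univ.erase i, w j * d :=
        sum_le_sum fun j _ => mul_le_mul_of_nonneg_left (hd j) (hw0 j)
    _ = (1 - w i) * d := by
        rw [← sum_mul, ← hw1, ← add_sum_erase _ _ (mem_univ i)]
        ring

theorem Affine.Simplex.weight_mem_Icc_of_mem_convexHull {V : Type*} [AddCommGroup V]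
    [Module ℝ V] {n : ℕ} (s : Affine.Simplex ℝ V n) {w : Fin (n + 1) → ℝ} (hw : ∑ i, w i = 1)
    (hx : univ.affineCombination ℝ s.points w ∈ convexHull ℝ (range s.points)) (i : Fin (n + 1)) :
    w i ∈ Set.Icc 0 1 := by
  rw [convexHull_eq_closedInterior, affineCombination_mem_closedInterior_iff hw] at hx
  exact hx i

theorem norm_sub_le_diam_convexHull_range {ι E : Type*} [Finite ι] [SeminormedAddCommGroup E]
    [NormedSpace ℝ E] (a : ι → E) (i j : ι) :
    ‖a j - a i‖ ≤ diam (convexHull ℝ (range a)) := by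
  rw [convexHull_diam, ← dist_eq_norm]
  exact dist_le_diam_of_mem (finite_range a).isBounded (mem_range_self j) (mem_range_self i)

theorem one_sub_barycentric_lower_bound_general
    (n : ℕ) (a : Fin (n + 1) → EuclideanSpace ℝ (Fin n))
    (hind : AffineIndependent ℝ a)
    (S : Set (EuclideanSpace ℝ (Fin n))) (hS : S = convexHull ℝ (Set.range a))
    (d : ℝ) (hdiam : Metric.diam S ≤ d)
    (β : Fin (n + 1) → EuclideanSpace ℝ (Fin n) → ℝ)
    (hβ1 : ∀ x, ∑ i, β i x = 1)
    (hβ2 : ∀ x, ∑ i, β i x • a i = x) :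
    ∃ c > (0 : ℝ), ∀ x ∈ interior S, ∀ i,
      1 - β i x ≥ c * ‖x - a i‖ / d := by
  subst hS
  refine ⟨1, one_pos, fun x hx i => ?_⟩
  have hβIcc : ∀ j, β j x ∈ Set.Icc 0 1 := by
    refine (⟨a, hind⟩ : Affine.Simplex ℝ _ n).weight_mem_Icc_of_mem_convexHull (hβ1 x) ?_
    rw [affineCombination_eq_linear_combination _ _ _ (hβ1 x), hβ2 x]
    exact interior_subset hx
  have hnorm : ‖x - a i‖ ≤ (1 - β i x) * d := by
    conv_lhs => rw [← hβ2 x]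
    exact norm_sum_smul_sub_le_one_sub_mul (fun j => (hβIcc j).1) (hβ1 x) i
      fun j => (norm_sub_le_diam_convexHull_range a i j).trans hdiam
  rw [one_mul, ge_iff_le]
  exact div_le_of_le_mul₀ (diam_nonneg.trans hdiam) (sub_nonneg.2 (hβIcc i).2) hnorm

theorem one_sub_barycentric_lower_bound
    (n : ℕ) (a : Fin (n + 1) → EuclideanSpace ℝ (Fin n))
    (hind : AffineIndependent ℝ a)
    (S : Set (EuclideanSpace ℝ (Fin n))) (hS : S = convexHull ℝ (Set.range a))
    (d : ℝ) (hd : 0 < d) (hdiam : Metric.diam S ≤ d)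
    (β : Fin (n + 1) → EuclideanSpace ℝ (Fin n) → ℝ)
    (hβ1 : ∀ x, ∑ i, β i x = 1)
    (hβ2 : ∀ x, ∑ i, β i x • a i = x) :
    ∃ c > (0 : ℝ), ∀ x ∈ interior S, ∀ i,
      1 - β i x ≥ c * ‖x - a i‖ / d :=
  one_sub_barycentric_lower_bound_general n a hind S hS d hdiam β hβ1 hβ2
end

section
/- Let ε > 0 and u ∈ W^{1,p}(ℝ) for some p ∈ [1,∞), with u everywhere defined and absolutely continuous. Then there exists r > 0 and h ∈ ℝ such that the piecewise affine interpolant v of u on the uniform grid {h + kr : k ∈ ℤ} satisfies ∫_ℝ |u′ − v′|^p ≤ ε. -/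
/-!
On each cell `[k r, (k + 1) r)` the slope of the piecewise affine interpolant of `u` is the
average of `u'` over the cell, so the claim is `‖u' - A_r u'‖_p → 0` as `r → 0⁺`, where `A_r`
replaces a function by its cell averages. Averaging over a cell is an `Lᵖ` contraction (Jensen),
hence so is `A_r`. For continuous compactly supported `g`, `A_r g → g` uniformly, with supports in
a fixed bounded set, so `‖g - A_r g‖_p → 0`. The general case follows by density of such `g`,
since `w - A_r w = (w - g) + (g - A_r g) + A_r (g - w)`.
-/

open MeasureTheory Set Filter Topology ENNReal

section

variable {α E : Type*} [MeasurableSpace α] {μ : Measure α} [NormedAddCommGroup E]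

theorem enorm_setAverage_rpow_mul_le [NormedSpace ℝ E] {s : Set α} {p : ℝ} (hp : 1 ≤ p)
    (hs : μ s ≠ ∞) {w : α → E} (hw : AEStronglyMeasurable w (μ.restrict s)) :
    ‖⨍ x in s, w x ∂μ‖ₑ ^ p * μ s ≤ ∫⁻ x in s, ‖w x‖ₑ ^ p ∂μ := by
  rcases eq_or_ne (μ s) 0 with h0 | h0
  · simp [h0]
  have hp0 : 0 < p := by linarith
  have : IsFiniteMeasure (μ.restrict s) := isFiniteMeasure_restrict.2 hs
  have : NeZero (μ.restrict s) := ⟨by simpa [Measure.restrict_eq_zero] using h0⟩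
  -- `⨍ x in s, w x ∂μ` is the integral of `w` against the probability measure `ν`
  set ν := (μ.restrict s univ)⁻¹ • μ.restrict s
  have hbound : ‖⨍ x in s, w x ∂μ‖ₑ ≤ ((μ s)⁻¹ * ∫⁻ x in s, ‖w x‖ₑ ^ p ∂μ) ^ p⁻¹ := by
    calc ‖∫ x, w x ∂ν‖ₑ ≤ eLpNorm w 1 ν := by
          rw [eLpNorm_one_eq_lintegral_enorm]; exact enorm_integral_le_lintegral_enorm _
      _ ≤ eLpNorm w (.ofReal p) ν :=
          eLpNorm_le_eLpNorm_of_exponent_le (ENNReal.one_le_ofReal.2 hp) (hw.smul_measure _)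
      _ = _ := by
          rw [eLpNorm_eq_lintegral_rpow_enorm_toReal (by positivity) ofReal_ne_top,
            toReal_ofReal hp0.le, lintegral_smul_measure, Measure.restrict_apply_univ, one_div,
            smul_eq_mul]
  calc ‖⨍ x in s, w x ∂μ‖ₑ ^ p * μ s
      ≤ ((μ s)⁻¹ * ∫⁻ x in s, ‖w x‖ₑ ^ p ∂μ) * μ s := by
        gcongr
        simpa [← ENNReal.rpow_mul, hp0.ne'] using ENNReal.rpow_le_rpow hbound hp0.le
    _ = ∫⁻ x in s, ‖w x‖ₑ ^ p ∂μ := by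
        rw [mul_comm, ← mul_assoc, ENNReal.mul_inv_cancel h0 hs, one_mul]

theorem tendsto_eLpNorm_sub_of_tendstoUniformly {ι : Type*} {l : Filter ι} {p : ℝ≥0∞}
    (hp : p ≠ ∞) {s : Set α} (hs : MeasurableSet s) (hμs : μ s ≠ ∞) {F : ι → α → E}
    {f : α → E} (hF : TendstoUniformly F f l) (hFs : ∀ᶠ i in l, (F i).support ⊆ s)
    (hfs : f.support ⊆ s) :
    Tendsto (fun i ↦ eLpNorm (f - F i) p μ) l (𝓝 0) := by
  have hC : μ s ^ (1 / p.toReal) ≠ ∞ := ENNReal.rpow_ne_top_of_nonneg (by positivity) hμs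
  refine ENNReal.tendsto_nhds_zero.2 fun ε hε ↦ ?_
  obtain ⟨δ, hδ, hδε⟩ := ENNReal.exists_nnreal_pos_mul_lt hC hε.ne'
  filter_upwards [Metric.tendstoUniformly_iff.1 hF δ hδ, hFs] with i hdist hsupp
  calc eLpNorm (f - F i) p μ ≤ ENNReal.ofReal δ * μ s ^ (1 / p.toReal) :=
        eLpNorm_sub_le_of_dist_bdd μ hp hs δ.coe_nonneg (fun x ↦ (hdist x).le) hfs hsupp
    _ ≤ ε := by rw [ofReal_coe_nnreal]; exact hδε.le

theorem integral_norm_rpow_le_of_eLpNorm_le {p η : ℝ} (hp : 0 < p) (hη : 0 ≤ η) {f : α → E}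
    (hf : AEStronglyMeasurable f μ) (h : eLpNorm f (.ofReal p) μ ≤ .ofReal η) :
    ∫ x, ‖f x‖ ^ p ∂μ ≤ η ^ p := by
  have hlp : lpNorm f (.ofReal p) μ ≤ η := by
    rw [← toReal_eLpNorm hf]; exact ENNReal.toReal_le_of_le_ofReal hη h
  rw [lpNorm_eq_integral_norm_rpow_toReal (by positivity) ofReal_ne_top hf,
    toReal_ofReal hp.le] at hlp
  have hint : 0 ≤ ∫ x, ‖f x‖ ^ p ∂μ := integral_nonneg fun x ↦ by positivity
  calc ∫ x, ‖f x‖ ^ p ∂μ = ((∫ x, ‖f x‖ ^ p ∂μ) ^ p⁻¹) ^ p := by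
        rw [← Real.rpow_mul hint, inv_mul_cancel₀ hp.ne', Real.rpow_one]
    _ ≤ η ^ p := by gcongr

end

namespace GridInterpolation

variable {E : Type*} [NormedAddCommGroup E] {r : ℝ}

def gridCell (r : ℝ) (k : ℤ) : Set ℝ := Ico (k * r) ((k + 1) * r)

theorem mem_gridCell_iff (hr : 0 < r) {k : ℤ} {x : ℝ} : x ∈ gridCell r k ↔ ⌊x / r⌋ = k := by
  rw [Int.floor_eq_iff, gridCell, mem_Ico, le_div_iff₀ hr, div_lt_iff₀ hr]

theorem mem_gridCell_floor (hr : 0 < r) (x : ℝ) : x ∈ gridCell r ⌊x / r⌋ :=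
  (mem_gridCell_iff hr).2 rfl

theorem dist_lt_of_mem_gridCell {k : ℤ} {x t : ℝ} (hx : x ∈ gridCell r k)
    (ht : t ∈ gridCell r k) : dist t x < r := by
  rw [Real.dist_eq, abs_sub_lt_iff]
  constructor <;> linarith [hx.1, hx.2, ht.1, ht.2]

theorem measurableSet_gridCell (r : ℝ) (k : ℤ) : MeasurableSet (gridCell r k) :=
  measurableSet_Ico

theorem volume_gridCell (r : ℝ) (k : ℤ) : volume (gridCell r k) = .ofReal r := by
  rw [gridCell, Real.volume_Ico]; ring_nf

theorem lintegral_eq_tsum_gridCell (hr : 0 < r) (f : ℝ → ℝ≥0∞) :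
    ∫⁻ x, f x = ∑' k, ∫⁻ x in gridCell r k, f x := by
  have hcover : ⋃ k, gridCell r k = univ :=
    eq_univ_of_forall fun x ↦ mem_iUnion.2 ⟨_, mem_gridCell_floor hr x⟩
  have hdisj : Pairwise (Function.onFun Disjoint (gridCell r)) := fun k l hkl ↦
    Set.disjoint_left.2 fun x hk hl ↦ hkl <| by
      rw [← (mem_gridCell_iff hr).1 hk, ← (mem_gridCell_iff hr).1 hl]
  rw [← setLIntegral_univ, ← hcover, lintegral_iUnion (measurableSet_gridCell r) hdisj]

theorem integrableOn_gridCell {w : ℝ → E} (hw : LocallyIntegrable w) (k : ℤ) :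
    IntegrableOn w (gridCell r k) :=
  (hw.integrableOn_isCompact isCompact_Icc).mono_set Ico_subset_Icc_self

variable [NormedSpace ℝ E]

noncomputable def cellAverage (r : ℝ) (w : ℝ → E) (x : ℝ) : E :=
  ⨍ t in gridCell r ⌊x / r⌋, w t

theorem cellAverage_eq_of_mem (hr : 0 < r) (w : ℝ → E) {k : ℤ} {x : ℝ}
    (hx : x ∈ gridCell r k) : cellAverage r w x = ⨍ t in gridCell r k, w t := by
  rw [cellAverage, (mem_gridCell_iff hr).1 hx]

theorem stronglyMeasurable_cellAverage (r : ℝ) (w : ℝ → E) :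
    StronglyMeasurable (cellAverage r w) :=
  (StronglyMeasurable.of_discrete (f := fun k : ℤ ↦ ⨍ t in gridCell r k, w t)).comp_measurable
    (measurable_id.div_const r).floor

theorem cellAverage_sub {f g : ℝ → E} (hf : LocallyIntegrable f) (hg : LocallyIntegrable g) :
    cellAverage r (f - g) = cellAverage r f - cellAverage r g := by
  ext x
  simp only [cellAverage, Pi.sub_apply, setAverage_eq,
    integral_sub (integrableOn_gridCell hf _) (integrableOn_gridCell hg _), smul_sub]

theorem eLpNorm_cellAverage_le {p : ℝ≥0∞} (hp1 : 1 ≤ p) (hp : p ≠ ∞) (hr : 0 < r)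
    {w : ℝ → E} (hw : AEStronglyMeasurable w) :
    eLpNorm (cellAverage r w) p volume ≤ eLpNorm w p volume := by
  have hp0 : p ≠ 0 := (zero_lt_one.trans_le hp1).ne'
  simp only [eLpNorm_eq_lintegral_rpow_enorm_toReal hp0 hp]
  gcongr ?_ ^ _
  calc ∫⁻ x, ‖cellAverage r w x‖ₑ ^ p.toReal
      = ∑' k, ∫⁻ x in gridCell r k, ‖cellAverage r w x‖ₑ ^ p.toReal :=
        lintegral_eq_tsum_gridCell hr _
    _ = ∑' k, ‖⨍ t in gridCell r k, w t‖ₑ ^ p.toReal * volume (gridCell r k) := by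
        refine tsum_congr fun k ↦ ?_
        rw [← setLIntegral_const]
        exact setLIntegral_congr_fun (measurableSet_gridCell r k) fun x hx ↦ by
          rw [cellAverage_eq_of_mem hr w hx]
    _ ≤ ∑' k, ∫⁻ x in gridCell r k, ‖w x‖ₑ ^ p.toReal := by
        gcongr with k
        refine enorm_setAverage_rpow_mul_le ?_ ?_ hw.restrict
        · simpa using ENNReal.toReal_mono hp hp1
        · rw [volume_gridCell]; exact ofReal_ne_top
    _ = ∫⁻ x, ‖w x‖ₑ ^ p.toReal := (lintegral_eq_tsum_gridCell hr _).symm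

theorem tendstoUniformly_cellAverage [CompleteSpace E] {g : ℝ → E} (hg : UniformContinuous g) :
    TendstoUniformly (fun r ↦ cellAverage r g) g (𝓝[>] 0) := by
  refine Metric.tendstoUniformly_iff.2 fun δ hδ ↦ ?_
  obtain ⟨η, hη, hgη⟩ := Metric.uniformContinuous_iff.1 hg (δ / 2) (half_pos hδ)
  filter_upwards [Ioo_mem_nhdsGT hη] with r ⟨hr, hrη⟩ x
  have hcell := mem_gridCell_floor hr x
  have hmem : cellAverage r g x ∈ Metric.closedBall (g x) (δ / 2) := by
    refine (convex_closedBall _ _).set_average_mem Metric.isClosed_closedBall ?_ ?_ ?_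
      (hg.continuous.locallyIntegrable.integrableOn_isCompact isCompact_Icc
        |>.mono_set Ico_subset_Icc_self)
    · rw [volume_gridCell]; exact (ofReal_pos.2 hr).ne'
    · rw [volume_gridCell]; exact ofReal_ne_top
    · refine (ae_restrict_mem (measurableSet_gridCell r _)).mono fun t ht ↦ ?_
      exact Metric.mem_closedBall.2 (hgη ((dist_lt_of_mem_gridCell hcell ht).trans hrη)).le
  rw [dist_comm]
  exact (Metric.mem_closedBall.1 hmem).trans_lt (half_lt_self hδ)

theorem support_cellAverage_subset (hr : 0 < r) (g : ℝ → E) :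
    (cellAverage r g).support ⊆ Metric.thickening r g.support := by
  intro x hx
  by_contra hfar
  refine hx ?_
  have hzero : ∀ t ∈ gridCell r ⌊x / r⌋, g t = 0 := fun t ht ↦ by
    by_contra hgt
    exact hfar (Metric.mem_thickening_iff.2
      ⟨t, hgt, dist_comm x t ▸ dist_lt_of_mem_gridCell (mem_gridCell_floor hr x) ht⟩)
  rw [cellAverage, setAverage_congr_fun (measurableSet_gridCell r _) (.of_forall hzero)]
  simp

theorem tendsto_eLpNorm_sub_cellAverage_of_hasCompactSupport [CompleteSpace E] {p : ℝ≥0∞}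
    (hp : p ≠ ∞) {g : ℝ → E} (hg : Continuous g) (hgs : HasCompactSupport g) :
    Tendsto (fun r ↦ eLpNorm (g - cellAverage r g) p volume) (𝓝[>] 0) (𝓝 0) := by
  have hbdd : Bornology.IsBounded (Metric.thickening 1 g.support) :=
    (hgs.isCompact.isBounded.subset (subset_tsupport g)).thickening
  refine tendsto_eLpNorm_sub_of_tendstoUniformly hp Metric.isOpen_thickening.measurableSet
    hbdd.measure_lt_top.ne
    (tendstoUniformly_cellAverage (hgs.uniformContinuous_of_continuous hg)) ?_
    (Metric.self_subset_thickening one_pos _)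
  filter_upwards [Ioo_mem_nhdsGT one_pos] with r ⟨hr, hr1⟩
  exact (support_cellAverage_subset hr g).trans (Metric.thickening_mono hr1.le _)

theorem tendsto_eLpNorm_sub_cellAverage [CompleteSpace E] {p : ℝ≥0∞} (hp1 : 1 ≤ p)
    (hp : p ≠ ∞) {w : ℝ → E} (hw : MemLp w p volume) :
    Tendsto (fun r ↦ eLpNorm (w - cellAverage r w) p volume) (𝓝[>] 0) (𝓝 0) := by
  refine ENNReal.tendsto_nhds_zero.2 fun ε hε ↦ ?_
  have hε3 : 0 < ε / 3 := ENNReal.div_pos hε.ne' ofNat_ne_top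
  obtain ⟨g, hgs, hwg, hg, hgp⟩ := hw.exists_hasCompactSupport_eLpNorm_sub_le hp hε3.ne'
  filter_upwards [(tendsto_eLpNorm_sub_cellAverage_of_hasCompactSupport hp hg hgs).eventually
    (Iic_mem_nhds hε3), self_mem_nhdsWithin] with r hgr hr
  have hw' := hw.aestronglyMeasurable
  have hg' := hgp.aestronglyMeasurable
  have hA := stronglyMeasurable_cellAverage (E := E) r
  have hsplit :
      w - cellAverage r w = (w - g) + (g - cellAverage r g) + cellAverage r (g - w) := by
    rw [cellAverage_sub (hgp.locallyIntegrable hp1) (hw.locallyIntegrable hp1)]; abel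
  calc eLpNorm (w - cellAverage r w) p volume
      ≤ eLpNorm (w - g) p volume + eLpNorm (g - cellAverage r g) p volume
          + eLpNorm (cellAverage r (g - w)) p volume := by
        rw [hsplit]
        refine (eLpNorm_add_le ((hw'.sub hg').add (hg'.sub (hA g).aestronglyMeasurable))
          (hA _).aestronglyMeasurable hp1).trans ?_
        gcongr
        exact eLpNorm_add_le (hw'.sub hg') (hg'.sub (hA g).aestronglyMeasurable) hp1
    _ ≤ ε / 3 + ε / 3 + ε / 3 := by
        gcongr
        refine (eLpNorm_cellAverage_le hp1 hp hr (hg'.sub hw')).trans ?_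
        rwa [eLpNorm_sub_comm]
    _ = ε := ENNReal.add_thirds ε

theorem setAverage_Ico_eq_slope [CompleteSpace E] {f f' : ℝ → E} {a b : ℝ} (hab : a < b)
    (hf : ∀ x ∈ Icc a b, HasDerivAt f (f' x) x) (hf' : IntervalIntegrable f' volume a b) :
    ⨍ x in Ico a b, f' x = slope f a b := by
  rw [setAverage_eq, Measure.restrict_congr_set Ico_ae_eq_Ioc,
    ← intervalIntegral.integral_of_le hab.le,
    intervalIntegral.integral_eq_sub_of_hasDerivAt
      (fun x hx ↦ hf x (uIcc_of_le hab.le ▸ hx)) hf',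
    measureReal_def, Real.volume_Ico, toReal_ofReal (sub_nonneg.2 hab.le), slope_def_module]

theorem cellAverage_eq_slope [CompleteSpace E] (hr : 0 < r) {f f' : ℝ → E}
    (hf : ∀ x, HasDerivAt f (f' x) x) (hf' : LocallyIntegrable f') (x : ℝ) :
    cellAverage r f' x = slope f (⌊x / r⌋ * r) ((⌊x / r⌋ + 1) * r) := by
  have hlt : (⌊x / r⌋ : ℝ) * r < (⌊x / r⌋ + 1) * r := by linarith
  exact setAverage_Ico_eq_slope hlt (fun t _ ↦ hf t)
    ((intervalIntegrable_iff_integrableOn_Icc_of_le hlt.le).2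
      (hf'.integrableOn_isCompact isCompact_Icc))

end GridInterpolation

open GridInterpolation in
theorem approximation_dim_one_general
    (p : ℝ) (hp : 1 ≤ p) (ε : ℝ) (hε : 0 < ε)
    (u u' : ℝ → ℝ) (hderiv : ∀ x, HasDerivAt u (u' x) x)
    (hu' : MemLp u' (ENNReal.ofReal p) volume) :
    ∃ r > (0 : ℝ), ∃ h : ℝ,
      (∫ x, |u' x -
        (u (h + (⌊(x - h) / r⌋ + 1) * r) - u (h + ⌊(x - h) / r⌋ * r)) / r| ^ p)
        ≤ ε := by
  have hp0 : 0 < p := by linarith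
  have hη : 0 < ε ^ p⁻¹ := Real.rpow_pos_of_pos hε _
  have hp1 : 1 ≤ ENNReal.ofReal p := one_le_ofReal.2 hp
  obtain ⟨r, hsmall, hr⟩ := ((tendsto_eLpNorm_sub_cellAverage hp1 ofReal_ne_top hu').eventually
    (Iio_mem_nhds (ofReal_pos.2 hη))).and self_mem_nhdsWithin |>.exists
  refine ⟨r, hr, 0, ?_⟩
  have hslope : ∀ x, (u ((⌊x / r⌋ + 1) * r) - u (⌊x / r⌋ * r)) / r = cellAverage r u' x := by
    intro x
    rw [cellAverage_eq_slope hr hderiv (hu'.locallyIntegrable hp1), slope_def_field]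
    ring_nf
  have hbound := integral_norm_rpow_le_of_eLpNorm_le hp0 hη.le
    (hu'.aestronglyMeasurable.sub (stronglyMeasurable_cellAverage r u').aestronglyMeasurable)
    hsmall.le
  rw [← Real.rpow_mul hε.le, inv_mul_cancel₀ hp0.ne', Real.rpow_one] at hbound
  simpa [hslope] using hbound

theorem approximation_dim_one
    (p : ℝ) (hp : 1 ≤ p) (ε : ℝ) (hε : 0 < ε)
    (u u' : ℝ → ℝ) (hderiv : ∀ x, HasDerivAt u (u' x) x)
    (hu : MemLp u (ENNReal.ofReal p) volume)
    (hu' : MemLp u' (ENNReal.ofReal p) volume) :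
    ∃ r > (0 : ℝ), ∃ h : ℝ,
      (∫ x, |u' x -
        (u (h + (⌊(x - h) / r⌋ + 1) * r) - u (h + ⌊(x - h) / r⌋ * r)) / r| ^ p)
        ≤ ε :=
  approximation_dim_one_general p hp ε hε u u' hderiv hu'
end

section
/- Let u ∈ W^{1,p}(ℝ), p ∈ [1,∞), be absolutely continuous, r > 0, and for h ∈ ℝ let v_h^r be the piecewise affine interpolant of u on the grid h + rℤ. Then (1/(2r)) ∫_{-r}^{r} ( ∫_ℝ |u′ − (v_h^r)′|^p ) dh ≤ C sup_{|t| ≤ r} ∫_ℝ |u′(x) − u′(x+t)|^p dx for a constant C depending only on p. -/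
/-!
On a cell `I` of the grid `h + rℤ` the slope `(v_h^r)'` is the mean of `u'` over `I`, so Jensen's
inequality gives, for `x ∈ I`,
`|u'(x) - (v_h^r)'(x)|^p ≤ r⁻¹ ∫_I |u'(x) - u'(y)|^p dy ≤ r⁻¹ ∫_{-r}^{r} |u'(x) - u'(x + t)|^p dt`,
since `I - x ⊆ (-r, r]`. Integrating in `x` and exchanging the integrals bounds
`∫ |u' - (v_h^r)'|^p` by twice the supremum for every single `h`, so `C = 2` works.
The computation is carried out with lower Lebesgue integrals, which need no integrability of the
interpolation error.
-/

open MeasureTheory Set intervalIntegral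
open scoped ENNReal

theorem enorm_rpow_eq_ofReal_abs_rpow (z : ℝ) {p : ℝ} (hp : 0 ≤ p) :
    ‖z‖ₑ ^ p = ENNReal.ofReal (|z| ^ p) := by
  rw [Real.enorm_eq_ofReal_abs, ENNReal.ofReal_rpow_of_nonneg (abs_nonneg z) hp]

theorem enorm_integral_rpow_le {α E : Type*} [MeasurableSpace α] [NormedAddCommGroup E]
    [NormedSpace ℝ E] {μ : Measure α} {f : α → E} {p : ℝ} (hp : 1 ≤ p)
    (hf : AEStronglyMeasurable f μ) :
    ‖∫ x, f x ∂μ‖ₑ ^ p ≤ μ univ ^ (p - 1) * ∫⁻ x, ‖f x‖ₑ ^ p ∂μ := by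
  have hp0 : 0 < p := zero_lt_one.trans_le hp
  calc ‖∫ x, f x ∂μ‖ₑ ^ p ≤ eLpNorm' f 1 μ ^ p := by
        gcongr
        simpa [eLpNorm'_eq_lintegral_enorm] using enorm_integral_le_lintegral_enorm f
    _ ≤ (eLpNorm' f p μ * μ univ ^ (1 / 1 - 1 / p)) ^ p := by
        gcongr; exact eLpNorm'_le_eLpNorm'_mul_rpow_measure_univ one_pos hp hf
    _ = μ univ ^ (p - 1) * ∫⁻ x, ‖f x‖ₑ ^ p ∂μ := by
        rw [ENNReal.mul_rpow_of_nonneg _ _ hp0.le, ← ENNReal.rpow_mul,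
          ← lintegral_rpow_enorm_eq_rpow_eLpNorm' hp0, mul_comm]
        congr 2
        field_simp

section
variable {α : Type*} [MeasurableSpace α] {μ : Measure α} {f : α → ℝ} {p : ℝ}

theorem integral_abs_rpow_le_of_lintegral_le {M : ℝ} (hp : 0 ≤ p) (hM : 0 ≤ M)
    (h : ∫⁻ x, ‖f x‖ₑ ^ p ∂μ ≤ ENNReal.ofReal M) : ∫ x, |f x| ^ p ∂μ ≤ M := by
  refine (ENNReal.ofReal_le_ofReal_iff hM).1 <| le_trans ?_ h
  calc ENNReal.ofReal (∫ x, |f x| ^ p ∂μ) ≤ ‖∫ x, |f x| ^ p ∂μ‖ₑ := Real.ofReal_le_enorm _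
    _ ≤ ∫⁻ x, ‖|f x| ^ p‖ₑ ∂μ := enorm_integral_le_lintegral_enorm _
    _ = ∫⁻ x, ‖f x‖ₑ ^ p ∂μ := by
        congr 1 with x
        rw [enorm_rpow_eq_ofReal_abs_rpow _ hp, Real.enorm_of_nonneg (by positivity)]

theorem MeasureTheory.MemLp.ofReal_integral_abs_rpow (hp : 0 < p)
    (hf : MemLp f (ENNReal.ofReal p) μ) :
    ENNReal.ofReal (∫ x, |f x| ^ p ∂μ) = ∫⁻ x, ‖f x‖ₑ ^ p ∂μ := by
  have hint : Integrable (fun x => |f x| ^ p) μ := by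
    simpa [Real.norm_eq_abs, hp.le] using
      hf.integrable_norm_rpow (by simpa using hp) ENNReal.ofReal_ne_top
  rw [ofReal_integral_eq_lintegral_ofReal hint (ae_of_all _ fun x => by positivity)]
  simp_rw [enorm_rpow_eq_ofReal_abs_rpow _ hp.le]

end

theorem lintegral_enorm_sub_comp_add_rpow_le {f : ℝ → ℝ} {p : ℝ} (hp : 1 ≤ p)
    (hf : AEMeasurable f) (t : ℝ) :
    ∫⁻ x, ‖f x - f (x + t)‖ₑ ^ p ≤ 2 ^ p * ∫⁻ x, ‖f x‖ₑ ^ p := by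
  have hp0 : 0 ≤ p := zero_le_one.trans hp
  calc ∫⁻ x, ‖f x - f (x + t)‖ₑ ^ p
      ≤ ∫⁻ x, 2 ^ (p - 1) * (‖f x‖ₑ ^ p + ‖f (x + t)‖ₑ ^ p) := by
        gcongr with x
        exact (ENNReal.rpow_le_rpow enorm_sub_le hp0).trans
          (ENNReal.rpow_add_le_mul_rpow_add_rpow _ _ hp)
    _ = 2 ^ p * ∫⁻ x, ‖f x‖ₑ ^ p := by
        rw [lintegral_const_mul' _ _ (by simp),
          lintegral_add_left' (hf.enorm.pow_const p),
          lintegral_add_right_eq_self (fun x => ‖f x‖ₑ ^ p) t, ← two_mul, ← mul_assoc]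
        congr 1
        conv_rhs => rw [← sub_add_cancel p 1]
        rw [ENNReal.rpow_add _ _ two_ne_zero ENNReal.ofNat_ne_top, ENNReal.rpow_one]

theorem MeasureTheory.MemLp.bddAbove_integral_abs_sub_comp_add_rpow {f : ℝ → ℝ} {p : ℝ}
    (hp : 1 ≤ p) (hf : MemLp f (ENNReal.ofReal p)) :
    BddAbove (range fun t => ∫ x, |f x - f (x + t)| ^ p) := by
  have hp0 : 0 ≤ p := zero_le_one.trans hp
  refine ⟨(2 ^ p * ∫⁻ x, ‖f x‖ₑ ^ p).toReal, ?_⟩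
  rintro _ ⟨t, rfl⟩
  refine integral_abs_rpow_le_of_lintegral_le hp0 ENNReal.toReal_nonneg ?_
  rw [ENNReal.ofReal_toReal]
  · exact lintegral_enorm_sub_comp_add_rpow_le hp hf.aemeasurable t
  · refine ENNReal.mul_ne_top (by simp) ?_
    have hfin := lintegral_rpow_enorm_lt_top_of_eLpNorm_lt_top
      (by simpa using zero_lt_one.trans_le hp) ENNReal.ofReal_ne_top hf.2
    simpa [ENNReal.toReal_ofReal hp0] using hfin.ne

theorem MeasureTheory.MemLp.lintegral_enorm_sub_comp_add_rpow_le_iSup {f : ℝ → ℝ} {p : ℝ}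
    (hp : 1 ≤ p) (hf : MemLp f (ENNReal.ofReal p)) {s : Set ℝ} {t : ℝ} (ht : t ∈ s) :
    ∫⁻ x, ‖f x - f (x + t)‖ₑ ^ p ≤ ENNReal.ofReal (⨆ τ : s, ∫ x, |f x - f (x + τ)| ^ p) := by
  have hbdd : BddAbove (range fun τ : s => ∫ x, |f x - f (x + τ)| ^ p) :=
    (hf.bddAbove_integral_abs_sub_comp_add_rpow hp).mono
      (range_comp_subset_range Subtype.val fun τ => ∫ x, |f x - f (x + τ)| ^ p)
  have hdiff : MemLp (fun x => f x - f (x + t)) (ENNReal.ofReal p) :=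
    hf.sub (hf.comp_measurePreserving (measurePreserving_add_right volume t))
  rw [← hdiff.ofReal_integral_abs_rpow (zero_lt_one.trans_le hp)]
  exact ENNReal.ofReal_le_ofReal (le_ciSup hbdd ⟨t, ht⟩)

section
variable {u u' : ℝ → ℝ} {p a r : ℝ}

theorem enorm_sub_slope_rpow_le (hp : 1 ≤ p) (hr : 0 < r)
    (hu : ∀ y ∈ Icc a (a + r), HasDerivAt u (u' y) y)
    (hu' : IntervalIntegrable u' volume a (a + r)) (x : ℝ) :
    ‖u' x - (u (a + r) - u a) / r‖ₑ ^ p ≤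
      (ENNReal.ofReal r)⁻¹ * ∫⁻ y in Ioc a (a + r), ‖u' x - u' y‖ₑ ^ p := by
  have hp0 : 0 < p := zero_lt_one.trans_le hp
  have har : a ≤ a + r := by linarith
  have hr' : ENNReal.ofReal r ≠ 0 := by simpa using hr
  have hIoc : IntegrableOn u' (Ioc a (a + r)) :=
    (intervalIntegrable_iff_integrableOn_Ioc_of_le har).1 hu'
  have hvol : volume (Ioc a (a + r)) = ENNReal.ofReal r := by simp
  have hmean : u' x - (u (a + r) - u a) / r = r⁻¹ * ∫ y in Ioc a (a + r), (u' x - u' y) := by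
    rw [← integral_eq_sub_of_hasDerivAt (by rwa [uIcc_of_le har]) hu', integral_of_le har,
      MeasureTheory.integral_sub (integrableOn_const (C := u' x) (by simp)) hIoc, setIntegral_const]
    simp only [measureReal_def, Real.volume_Ioc, add_sub_cancel_left, hr.le, ENNReal.toReal_ofReal,
      smul_eq_mul]
    field_simp
  calc ‖u' x - (u (a + r) - u a) / r‖ₑ ^ p
      = (ENNReal.ofReal r)⁻¹ ^ p * ‖∫ y in Ioc a (a + r), (u' x - u' y)‖ₑ ^ p := by
        rw [hmean, enorm_mul, ENNReal.mul_rpow_of_nonneg _ _ hp0.le, enorm_inv hr.ne',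
          Real.enorm_of_nonneg hr.le]
    _ ≤ (ENNReal.ofReal r)⁻¹ ^ p * (ENNReal.ofReal r ^ (p - 1) *
          ∫⁻ y in Ioc a (a + r), ‖u' x - u' y‖ₑ ^ p) := by
        gcongr
        simpa [hvol] using enorm_integral_rpow_le hp
          (aestronglyMeasurable_const.sub hIoc.aestronglyMeasurable)
    _ = (ENNReal.ofReal r)⁻¹ * ∫⁻ y in Ioc a (a + r), ‖u' x - u' y‖ₑ ^ p := by
        rw [← mul_assoc, ENNReal.inv_rpow, ← ENNReal.div_eq_inv_mul,
          ← ENNReal.rpow_sub _ _ hr' ENNReal.ofReal_ne_top, sub_sub_cancel_left,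
          ENNReal.rpow_neg_one]

end

theorem setLIntegral_Ioc_le_setLIntegral_Ioc_comp_add (F : ℝ → ℝ≥0∞) {a r x : ℝ}
    (hx : x ∈ Icc a (a + r)) :
    ∫⁻ y in Ioc a (a + r), F y ≤ ∫⁻ t in Ioc (-r) r, F (x + t) := by
  rw [← (measurePreserving_add_left volume x).setLIntegral_comp_preimage_emb
    (measurableEmbedding_addLeft x), preimage_const_add_Ioc]
  exact lintegral_mono_set (Ioc_subset_Ioc (by linarith [hx.2]) (by linarith [hx.1]))

theorem mem_Icc_add_floor_div_mul {r : ℝ} (hr : 0 < r) (h x : ℝ) :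
    x ∈ Icc (h + ⌊(x - h) / r⌋ * r) (h + ⌊(x - h) / r⌋ * r + r) := by
  have hle := Int.floor_le ((x - h) / r)
  have hlt := Int.lt_floor_add_one ((x - h) / r)
  rw [le_div_iff₀ hr] at hle
  rw [div_lt_iff₀ hr] at hlt
  constructor <;> linarith

theorem measurable_of_hasDerivAt {u u' : ℝ → ℝ} (hu : ∀ x, HasDerivAt u (u' x) x) :
    Measurable u' :=
  funext (fun x => (hu x).deriv) ▸ measurable_deriv u

/-- The derivative `(v_h^r)'` of the piecewise affine interpolant of `u` on the grid `h + rℤ`. -/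
noncomputable def gridSlope (u : ℝ → ℝ) (h r x : ℝ) : ℝ :=
  (u (h + (⌊(x - h) / r⌋ + 1) * r) - u (h + ⌊(x - h) / r⌋ * r)) / r

section
variable {u u' : ℝ → ℝ} {p r : ℝ}

theorem enorm_sub_gridSlope_rpow_le (hp : 1 ≤ p) (hr : 0 < r)
    (hu : ∀ x, HasDerivAt u (u' x) x) (hu' : LocallyIntegrable u') (h x : ℝ) :
    ‖u' x - gridSlope u h r x‖ₑ ^ p ≤
      (ENNReal.ofReal r)⁻¹ * ∫⁻ t in Ioc (-r) r, ‖u' x - u' (x + t)‖ₑ ^ p := by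
  have hcell : h + (⌊(x - h) / r⌋ + 1) * r = h + ⌊(x - h) / r⌋ * r + r := by ring
  rw [gridSlope, hcell]
  exact (enorm_sub_slope_rpow_le hp hr (fun y _ => hu y)
    ((hu'.integrableOn_isCompact isCompact_uIcc).intervalIntegrable) x).trans
    (by
      gcongr _ * ?_
      exact setLIntegral_Ioc_le_setLIntegral_Ioc_comp_add _ (mem_Icc_add_floor_div_mul hr h x))

theorem lintegral_enorm_sub_gridSlope_rpow_le {M : ℝ≥0∞} (hp : 1 ≤ p) (hr : 0 < r)
    (hu : ∀ x, HasDerivAt u (u' x) x) (hu' : LocallyIntegrable u')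
    (hM : ∀ t ∈ Ioc (-r) r, ∫⁻ x, ‖u' x - u' (x + t)‖ₑ ^ p ≤ M) (h : ℝ) :
    ∫⁻ x, ‖u' x - gridSlope u h r x‖ₑ ^ p ≤ 2 * M := by
  have hr' : ENNReal.ofReal r ≠ 0 := by simpa using hr
  have hmeas : Measurable (Function.uncurry fun x t => ‖u' x - u' (x + t)‖ₑ ^ p) := by
    have := measurable_of_hasDerivAt hu
    fun_prop
  calc ∫⁻ x, ‖u' x - gridSlope u h r x‖ₑ ^ p
      ≤ ∫⁻ x, (ENNReal.ofReal r)⁻¹ * ∫⁻ t in Ioc (-r) r, ‖u' x - u' (x + t)‖ₑ ^ p :=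
        lintegral_mono (enorm_sub_gridSlope_rpow_le hp hr hu hu' h)
    _ = (ENNReal.ofReal r)⁻¹ * ∫⁻ t in Ioc (-r) r, ∫⁻ x, ‖u' x - u' (x + t)‖ₑ ^ p := by
        rw [lintegral_const_mul' _ _ (by simp [hr]), lintegral_lintegral_swap hmeas.aemeasurable]
    _ ≤ (ENNReal.ofReal r)⁻¹ * ∫⁻ _ in Ioc (-r) r, M := by
        gcongr _ * ?_
        exact setLIntegral_mono' measurableSet_Ioc hM
    _ = 2 * M := by
        rw [setLIntegral_const, Real.volume_Ioc, show r - -r = 2 * r by ring,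
          ENNReal.ofReal_mul zero_le_two, ENNReal.ofReal_ofNat,
          show M * (2 * ENNReal.ofReal r) = ENNReal.ofReal r * (2 * M) by ring,
          ENNReal.inv_mul_cancel_left hr' ENNReal.ofReal_ne_top]

end

theorem averaged_interpolation_estimate_dim_one
    (p : ℝ) (hp : 1 ≤ p) :
    ∃ C > (0 : ℝ), ∀ (u u' : ℝ → ℝ), (∀ x, HasDerivAt u (u' x) x) →
      MemLp u (ENNReal.ofReal p) volume →
      MemLp u' (ENNReal.ofReal p) volume →
      ∀ r > (0 : ℝ),
        (1 / (2 * r)) * ∫ h in (-r)..r,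
            (∫ x, |u' x -
              (u (h + (⌊(x - h) / r⌋ + 1) * r) - u (h + ⌊(x - h) / r⌋ * r)) / r| ^ p)
          ≤ C * ⨆ t : Set.Icc (-r) r, ∫ x, |u' x - u' (x + t)| ^ p := by
  refine ⟨2, two_pos, fun u u' hu _ hu' r hr => ?_⟩
  have hp0 : 0 < p := zero_lt_one.trans_le hp
  set S := ⨆ t : Set.Icc (-r) r, ∫ x, |u' x - u' (x + t)| ^ p
  have hS0 : 0 ≤ S := Real.iSup_nonneg fun t => integral_nonneg fun x => by positivity
  have hgrid : ∀ h, ∫ x, |u' x - gridSlope u h r x| ^ p ≤ 2 * S := fun h =>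
    integral_abs_rpow_le_of_lintegral_le hp0.le (by positivity) <| by
      rw [ENNReal.ofReal_mul zero_le_two, ENNReal.ofReal_ofNat]
      exact lintegral_enorm_sub_gridSlope_rpow_le hp hr hu
        (hu'.locallyIntegrable (ENNReal.one_le_ofReal.2 hp))
        (fun t ht => hu'.lintegral_enorm_sub_comp_add_rpow_le_iSup hp (Ioc_subset_Icc_self ht)) h
  have havg : ∫ h in (-r)..r, ∫ x, |u' x - gridSlope u h r x| ^ p ≤ 2 * S * (2 * r) :=
    calc ∫ h in (-r)..r, ∫ x, |u' x - gridSlope u h r x| ^ p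
        ≤ ‖∫ h in (-r)..r, ∫ x, |u' x - gridSlope u h r x| ^ p‖ := Real.le_norm_self _
      _ ≤ 2 * S * |r - -r| := norm_integral_le_of_norm_le_const fun h _ => by
          rw [Real.norm_of_nonneg (integral_nonneg fun x => by positivity)]
          exact hgrid h
      _ = 2 * S * (2 * r) := by rw [abs_of_pos (by linarith)]; ring
  calc (1 / (2 * r)) * ∫ h in (-r)..r, ∫ x, |u' x - gridSlope u h r x| ^ p
      ≤ (1 / (2 * r)) * (2 * S * (2 * r)) := by gcongr
    _ = 2 * S := by field_simp
end
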